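/- Fix κ > 0, ε > 0 and ū < −1. Then E[∅] = (1+ū)²/(2κ²), and every ℤ²-periodic measurable set A ⊆ ℝ² with |A ∩ Q| > 0 satisfies E[A] > (1+ū)²/(2κ²). In other words, the trivial state u ≡ −1 is the unique global minimizer of the sharp-interface energy when ū < −1. -/

import Mathlib

/-!
Only the zero Fourier mode matters. The perimeter and all modes `q ≠ 0` contribute
nonnegatively, while `â_0` is the mean `2|A ∩ Q| - 1 - ū` of `2·1_A - 1 - ū` over `Q`; since
`-1 - ū > 0`, this exceeds `|1 + ū|` in absolute value as soon as `|A ∩ Q| > 0`. For `A = ∅` the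
function is the constant `-1 - ū`, whose only nonzero coefficient is `â_0`.

Bounding the series below by one term needs its summability (a non-summable `tsum` is `0`). This
is Bessel's inequality: the characters `x ↦ e^{2πi q·x}` on `Q` are the pull-backs of the
orthonormal monomials on `ℝ^d/ℤ^d` along the quotient map, which is measure preserving on `Q`.
-/

open MeasureTheory Real ENNReal NNReal

noncomputable section

/-- The unit cell `Q = [0,1)^d` in `ℝ^d`. -/
def Qcell (d : ℕ) : Set (EuclideanSpace ℝ (Fin d)) :=
  WithLp.ofLp ⁻¹' (Set.univ.pi fun _ => Set.Ico (0 : ℝ) 1)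

/-- The integer vector `n` viewed as a point of `ℝ^d`. -/
def zvec (d : ℕ) (n : Fin d → ℤ) : EuclideanSpace ℝ (Fin d) :=
  WithLp.toLp 2 fun i => (n i : ℝ)

/-- A set `A ⊆ ℝ^d` is `ℤ^d`-periodic if `A + n = A` for every `n ∈ ℤ^d`. -/
def IsPeriodicSet (d : ℕ) (A : Set (EuclideanSpace ℝ (Fin d))) : Prop :=
  ∀ (n : Fin d → ℤ) (x : EuclideanSpace ℝ (Fin d)), x + zvec d n ∈ A ↔ x ∈ A

/-- Fourier coefficient over the unit cell: `f̂_q = ∫_Q f(x) e^{-2πi q·x} dx`. -/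
def fCoeff (d : ℕ) (f : EuclideanSpace ℝ (Fin d) → ℝ) (q : Fin d → ℤ) : ℂ :=
  ∫ x in Qcell d,
    (f x : ℂ) * Complex.exp (-(2 * Real.pi * Complex.I) * (∑ i, (q i : ℝ) * x i : ℝ))

/-- The function `2·1_A - 1 - ū`. -/
def uSet (d : ℕ) (ub : ℝ) (A : Set (EuclideanSpace ℝ (Fin d))) :
    EuclideanSpace ℝ (Fin d) → ℝ :=
  fun x => A.indicator (fun _ => (2 : ℝ)) x - 1 - ub

/-- The screened Coulomb (nonlocal) part of the sharp interface energy, in Fourier form: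
`(1/2)·∑_{q ∈ ℤ^d} |â_q|²/(κ² + 4π²|q|²)` where `â_q` is the Fourier coefficient
of `2·1_A − 1 − ū`. -/
def nonlocalSharp (d : ℕ) (κ ub : ℝ) (A : Set (EuclideanSpace ℝ (Fin d))) : ℝ :=
  (1 / 2) * ∑' q : Fin d → ℤ,
    (‖fCoeff d (uSet d ub A) q‖) ^ 2
      / (κ ^ 2 + 4 * Real.pi ^ 2 * ∑ i, ((q i : ℝ)) ^ 2)

/-- The sharp interface energy
`E[A] = ε·H^{d-1}(∂A ∩ Q) + (1/2)·∑_{q ∈ ℤ^d} |â_q|²/(κ² + 4π²|q|²)`,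
valued in `ℝ≥0∞` since the perimeter term may be infinite. -/
def sharpEnergy (d : ℕ) (κ ε ub : ℝ) (A : Set (EuclideanSpace ℝ (Fin d))) : ℝ≥0∞ :=
  ENNReal.ofReal ε * μH[(d : ℝ) - 1] (frontier A ∩ Qcell d)
    + ENNReal.ofReal (nonlocalSharp d κ ub A)


/-- The background charge `ū(ε) = −1 + ε^{2/3}·|ln ε|^{1/3}·δ̄`. -/
def ubar (δ ε : ℝ) : ℝ :=
  -1 + ε ^ ((2 : ℝ) / 3) * |Real.log ε| ^ ((1 : ℝ) / 3) * δ

open UnitAddTorus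

namespace SharpInterface

variable {d : ℕ}

def toTorus (x : EuclideanSpace ℝ (Fin d)) : UnitAddTorus (Fin d) :=
  fun i => (x i : UnitAddCircle)

/- Mathlib's Fourier analysis on `UnitAddTorus` uses the Haar probability measure, which is only a
local instance there; the global `volume` on `AddCircle 1` is a different term. -/
abbrev torusHaar (d : ℕ) : Measure (UnitAddTorus (Fin d)) :=
  Measure.pi fun _ => AddCircle.haarAddCircle

theorem measurePreserving_toTorus :
    MeasurePreserving (toTorus (d := d)) (volume.restrict (Qcell d)) (torusHaar d) := by
  have hQ : MeasurableSet (Set.univ.pi fun _ : Fin d => Set.Ico (0 : ℝ) 1) :=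
    MeasurableSet.univ_pi fun _ => measurableSet_Ico
  have hcell : MeasurePreserving (WithLp.ofLp : EuclideanSpace ℝ (Fin d) → Fin d → ℝ)
      (volume.restrict (Qcell d)) (volume.restrict (Set.univ.pi fun _ => Set.Ico (0 : ℝ) 1)) :=
    (EuclideanSpace.volume_preserving_symm_measurableEquiv_toLp (Fin d)).restrict_preimage hQ
  have hmk : MeasurePreserving ((↑) : ℝ → UnitAddCircle) (volume.restrict (Set.Ico 0 1))
      AddCircle.haarAddCircle := by
    have h := UnitAddCircle.measurePreserving_mk 0
    rwa [zero_add, ← Measure.restrict_congr_set Ico_ae_eq_Ioc,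
      AddCircle.volume_eq_smul_haarAddCircle, ENNReal.ofReal_one, one_smul] at h
  have hpi : MeasurePreserving (fun (y : Fin d → ℝ) i => (y i : UnitAddCircle))
      (volume.restrict (Set.univ.pi fun _ => Set.Ico (0 : ℝ) 1)) (torusHaar d) := by
    rw [volume_pi, Measure.restrict_pi_pi]
    exact measurePreserving_pi _ _ fun _ => hmk
  exact hpi.comp hcell

theorem mFourier_neg_toTorus (q : Fin d → ℤ) (x : EuclideanSpace ℝ (Fin d)) :
    mFourier (-q) (toTorus x)
      = Complex.exp (-(2 * π * Complex.I) * (∑ i, (q i : ℝ) * x i : ℝ)) := by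
  simp only [mFourier, ContinuousMap.coe_mk, toTorus, fourier_coe_apply, Pi.neg_apply,
    ← Complex.exp_sum]
  congr 1
  push_cast
  rw [Finset.mul_sum]
  refine Finset.sum_congr rfl fun i _ => ?_
  ring

instance : IsProbabilityMeasure (volume.restrict (Qcell d)) := by
  constructor
  rw [← Set.preimage_univ (f := toTorus),
    measurePreserving_toTorus.measure_preimage MeasurableSet.univ.nullMeasurableSet,
    measure_univ]

def cellFourierLp (q : Fin d → ℤ) : Lp ℂ 2 (volume.restrict (Qcell d)) :=
  Lp.compMeasurePreserving toTorus measurePreserving_toTorus (mFourierLp 2 q)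

theorem orthonormal_cellFourierLp : Orthonormal ℂ (cellFourierLp (d := d)) :=
  orthonormal_mFourier.comp_linearIsometry
    (Lp.compMeasurePreservingₗᵢ ℂ toTorus measurePreserving_toTorus)

theorem coeFn_cellFourierLp (q : Fin d → ℤ) :
    cellFourierLp q =ᵐ[volume.restrict (Qcell d)] fun x => mFourier q (toTorus x) :=
  (Lp.coeFn_compMeasurePreserving _ _).trans
    (measurePreserving_toTorus.quasiMeasurePreserving.ae_eq_comp (coeFn_mFourierLp 2 q))

theorem fCoeff_eq_inner {f : EuclideanSpace ℝ (Fin d) → ℝ}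
    (hf : MemLp (fun x => (f x : ℂ)) 2 (volume.restrict (Qcell d))) (q : Fin d → ℤ) :
    fCoeff d f q = inner ℂ (cellFourierLp q) (hf.toLp _) := by
  rw [L2.inner_def, fCoeff]
  refine integral_congr_ae ?_
  filter_upwards [coeFn_cellFourierLp q, hf.coeFn_toLp] with x hq hfx
  rw [hq, hfx, RCLike.inner_apply', ← mFourier_neg, mFourier_neg_toTorus, mul_comm]

theorem summable_norm_fCoeff_sq {f : EuclideanSpace ℝ (Fin d) → ℝ}
    (hf : MemLp (fun x => (f x : ℂ)) 2 (volume.restrict (Qcell d))) :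
    Summable fun q => ‖fCoeff d f q‖ ^ 2 := by
  simpa only [fCoeff_eq_inner hf] using
    orthonormal_cellFourierLp.inner_products_summable (hf.toLp _)

theorem fCoeff_const (c : ℝ) (q : Fin d → ℤ) :
    fCoeff d (fun _ => c) q = if q = 0 then (c : ℂ) else 0 := by
  have hc : (memLp_const (c : ℂ)).toLp _ = (c : ℂ) • cellFourierLp (0 : Fin d → ℤ) := by
    refine Lp.ext ?_
    filter_upwards [(memLp_const (c : ℂ)).coeFn_toLp, Lp.coeFn_smul (c : ℂ) (cellFourierLp 0),
      coeFn_cellFourierLp 0] with x h1 h2 h3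
    rw [h1, h2, Pi.smul_apply, h3, mFourier_zero, ContinuousMap.one_apply, smul_eq_mul, mul_one]
  rw [fCoeff_eq_inner (memLp_const _), hc, inner_smul_right,
    orthonormal_iff_ite.mp orthonormal_cellFourierLp]
  split_ifs <;> simp_all [eq_comm]

theorem fCoeff_zero (f : EuclideanSpace ℝ (Fin d) → ℝ) :
    fCoeff d f 0 = ∫ x in Qcell d, (f x : ℂ) := by
  simp [fCoeff]

variable {κ ub : ℝ} {A : Set (EuclideanSpace ℝ (Fin d))}

theorem memLp_uSet (hA : MeasurableSet A) :
    MemLp (fun x => (uSet d ub A x : ℂ)) 2 (volume.restrict (Qcell d)) := by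
  have h : MemLp (fun x => A.indicator (fun _ => (2 : ℝ)) x - (1 + ub)) 2
      (volume.restrict (Qcell d)) :=
    ((memLp_const (2 : ℝ)).indicator hA).sub (memLp_const (1 + ub))
  have h' := h.ofReal (K := ℂ)
  simp only [RCLike.ofReal_eq_complex_ofReal] at h'
  simpa only [uSet, sub_sub] using h'

theorem fCoeff_uSet_zero (hA : MeasurableSet A) :
    fCoeff d (uSet d ub A) 0 = ((2 * volume.real (A ∩ Qcell d) - 1 - ub : ℝ) : ℂ) := by
  rw [fCoeff_zero, integral_complex_ofReal]
  congr 1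
  simp only [uSet, sub_sub]
  rw [integral_sub ((integrable_const (2 : ℝ)).indicator hA) (integrable_const _),
    integral_indicator_const _ hA, measureReal_restrict_apply hA]
  simp [mul_comm]

theorem uSet_empty : uSet d ub ∅ = fun _ => -1 - ub := by
  funext x
  simp only [uSet, Set.indicator_empty]
  ring

theorem nonlocalSharp_empty : nonlocalSharp d κ ub ∅ = (1 + ub) ^ 2 / (2 * κ ^ 2) := by
  rw [nonlocalSharp, uSet_empty, tsum_eq_single 0 fun q hq => by simp [fCoeff_const, hq]]
  simp only [fCoeff_const, if_true, Complex.norm_real, Real.norm_eq_abs, sq_abs, Pi.zero_apply,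
    Int.cast_zero, zero_pow two_ne_zero, Finset.sum_const_zero, mul_zero, add_zero]
  ring

theorem norm_fCoeff_zero_sq_div_le_nonlocalSharp (hκ : κ ≠ 0) (hA : MeasurableSet A) :
    ‖fCoeff d (uSet d ub A) 0‖ ^ 2 / (2 * κ ^ 2) ≤ nonlocalSharp d κ ub A := by
  have hκ2 : 0 < κ ^ 2 := by positivity
  have hden (q : Fin d → ℤ) : κ ^ 2 ≤ κ ^ 2 + 4 * π ^ 2 * ∑ i, (q i : ℝ) ^ 2 :=
    le_add_of_nonneg_right (by positivity)
  have hsum : Summable fun q : Fin d → ℤ =>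
      ‖fCoeff d (uSet d ub A) q‖ ^ 2 / (κ ^ 2 + 4 * π ^ 2 * ∑ i, (q i : ℝ) ^ 2) :=
    ((summable_norm_fCoeff_sq (memLp_uSet hA)).div_const (κ ^ 2)).of_nonneg_of_le
      (fun q => by have := hden q; positivity)
      (fun q => div_le_div_of_nonneg_left (sq_nonneg _) hκ2 (hden q))
  have h0 := hsum.le_tsum 0 fun q _ => by have := hden q; positivity
  simp only [Pi.zero_apply, Int.cast_zero, zero_pow two_ne_zero, Finset.sum_const_zero,
    mul_zero, add_zero] at h0
  rw [nonlocalSharp, mul_comm (2 : ℝ), ← div_div, div_eq_mul_one_div _ 2, mul_comm]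
  exact mul_le_mul_of_nonneg_left h0 (by norm_num)

theorem nonlocalSharp_empty_lt (hκ : κ ≠ 0) (hub : ub < -1) (hA : MeasurableSet A)
    (hpos : 0 < volume (A ∩ Qcell d)) :
    nonlocalSharp d κ ub ∅ < nonlocalSharp d κ ub A := by
  have hm : 0 < volume.real (A ∩ Qcell d) :=
    ENNReal.toReal_pos hpos.ne' (measure_ne_top_of_subset Set.inter_subset_right
      (by simp [← Measure.restrict_apply_univ]))
  refine lt_of_lt_of_le ?_ (norm_fCoeff_zero_sq_div_le_nonlocalSharp hκ hA)
  rw [nonlocalSharp_empty, fCoeff_uSet_zero hA, Complex.norm_real, Real.norm_eq_abs, sq_abs]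
  refine div_lt_div_of_pos_right ?_ (by positivity)
  nlinarith

end SharpInterface

open SharpInterface

theorem statement_2_general (κ ε ub : ℝ) (hκ : 0 < κ) (hub : ub < -1) :
    sharpEnergy 2 κ ε ub ∅ = ENNReal.ofReal ((1 + ub) ^ 2 / (2 * κ ^ 2)) ∧
    ∀ A : Set (EuclideanSpace ℝ (Fin 2)), MeasurableSet A → IsPeriodicSet 2 A →
      0 < volume (A ∩ Qcell 2) →
      ENNReal.ofReal ((1 + ub) ^ 2 / (2 * κ ^ 2)) < sharpEnergy 2 κ ε ub A := by
  have hempty : sharpEnergy 2 κ ε ub ∅ = ENNReal.ofReal (nonlocalSharp 2 κ ub ∅) := by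
    rw [sharpEnergy, frontier_empty, Set.empty_inter, measure_empty, mul_zero, zero_add]
  refine ⟨hempty.trans (by rw [nonlocalSharp_empty]), fun A hA _ hpos => ?_⟩
  rw [← nonlocalSharp_empty (d := 2)]
  calc ENNReal.ofReal (nonlocalSharp 2 κ ub ∅)
      < ENNReal.ofReal (nonlocalSharp 2 κ ub A) :=
        (ENNReal.ofReal_lt_ofReal_iff_of_nonneg (by rw [nonlocalSharp_empty]; positivity)).mpr
          (nonlocalSharp_empty_lt hκ.ne' hub hA hpos)
    _ ≤ sharpEnergy 2 κ ε ub A := le_add_self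

/-- for `ū < −1`, the empty set has energy `(1+ū)²/(2κ²)` and every
`ℤ²`-periodic measurable set of positive measure has strictly larger energy, i.e.
`u ≡ −1` is the unique global minimizer of the sharp interface energy. -/
theorem statement_2 (κ ε ub : ℝ) (hκ : 0 < κ) (hε : 0 < ε) (hub : ub < -1) :
    sharpEnergy 2 κ ε ub ∅ = ENNReal.ofReal ((1 + ub) ^ 2 / (2 * κ ^ 2)) ∧
    ∀ A : Set (EuclideanSpace ℝ (Fin 2)), MeasurableSet A → IsPeriodicSet 2 A →
      0 < volume (A ∩ Qcell 2) →
      ENNReal.ofReal ((1 + ub) ^ 2 / (2 * κ ^ 2)) < sharpEnergy 2 κ ε ub A :=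
  statement_2_general κ ε ub hκ hub
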